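/- Let P ∈ ℝ^{n×n} be any matrix, θ ∈ ℝ, and L ≥ 1 an integer. For each i ∈ {1,…,n} and z ≥ 1, let d_i(z) ∈ ℝ^d, and define the virtual iterates d_i^0(z) = d_i^{−1}(z) = d_i(z) and d_i^{k+1}(z) = (1+θ)·Σ_{j=1}^n P_{ij}·d_j^k(z) − θ·d_i^{k−1}(z) for k ≥ 0. Define z_i^L(1) = z_i^{L−1}(1) = 0 and, for z ≥ 2, z_i^0(z) = z_i^L(z−1) + d_i(z−1), z_i^{−1}(z) = z_i^{L−1}(z−1) + d_i(z−1), and z_i^{k+1}(z) = (1+θ)·Σ_{j=1}^n P_{ij}·z_j^k(z) − θ·z_i^{k−1}(z) for k = 0,…,L−1. Then for every z ≥ 2, every k ∈ {1,…,L}, and every i ∈ {1,…,n}: z_i^k(z) = Σ_{τ=1}^{z−1} d_i^{(z−τ−1)L+k}(τ). -/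
import Mathlib


/-!
Statement 18 (A_key_Tranduction, Eq. (15)): the online accelerated gossip
strategy of AD-FTGL unrolls as
`z_i^k(z) = Σ_{τ=1}^{z−1} d_i^{(z−τ−1)L+k}(τ)` for `z ≥ 2` and `1 ≤ k ≤ L`.
-/

open scoped BigOperators
open Finset

noncomputable section

abbrev EV (d : ℕ) := EuclideanSpace ℝ (Fin d)

lemma ag_swap {n d : ℕ} (s : Finset ℕ) (θ : ℝ) (c : Fin n → ℝ)
    (G : Fin n → ℕ → EV d) (H : ℕ → EV d) :
    (1 + θ) • (∑ j, c j • ∑ τ ∈ s, G j τ) - θ • ∑ τ ∈ s, H τ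
      = ∑ τ ∈ s, ((1 + θ) • (∑ j, c j • G j τ) - θ • H τ) := by
  rw [Finset.sum_sub_distrib, ← Finset.smul_sum, ← Finset.smul_sum]
  congr 2
  simp_rw [Finset.smul_sum]
  exact Finset.sum_comm

theorem statement_18 (n d L : ℕ) (hn : 1 ≤ n) (hL : 1 ≤ L) (θ : ℝ)
    (P : Matrix (Fin n) (Fin n) ℝ)
    (dv : Fin n → ℕ → EV d)
    -- the virtual accelerated-gossip iterates d_i^k(z)
    (D : Fin n → ℕ → ℤ → EV d)
    (hD0 : ∀ i z, 1 ≤ z → D i z 0 = dv i z)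
    (hDm1 : ∀ i z, 1 ≤ z → D i z (-1) = dv i z)
    (hDrec : ∀ i z, 1 ≤ z → ∀ k : ℤ, 0 ≤ k →
      D i z (k + 1) = (1 + θ) • (∑ j, P i j • D j z k) - θ • D i z (k - 1))
    -- the online iterates z_i^k(z)
    (Zk : Fin n → ℕ → ℤ → EV d)
    (hZ1L : ∀ i, Zk i 1 (L : ℤ) = 0)
    (hZ1L1 : ∀ i, Zk i 1 ((L : ℤ) - 1) = 0)
    (hZ0 : ∀ i z, 2 ≤ z → Zk i z 0 = Zk i (z - 1) (L : ℤ) + dv i (z - 1))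
    (hZm1 : ∀ i z, 2 ≤ z →
      Zk i z (-1) = Zk i (z - 1) ((L : ℤ) - 1) + dv i (z - 1))
    (hZrec : ∀ i z, 2 ≤ z → ∀ k : ℤ, 0 ≤ k → k ≤ (L : ℤ) - 1 →
      Zk i z (k + 1) = (1 + θ) • (∑ j, P i j • Zk j z k) - θ • Zk i z (k - 1)) :
    ∀ z, 2 ≤ z → ∀ k : ℤ, 1 ≤ k → k ≤ (L : ℤ) → ∀ i : Fin n,
      Zk i z k = ∑ τ ∈ Finset.Icc 1 (z - 1),
        D i τ (((z : ℤ) - (τ : ℤ) - 1) * L + k) := by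
  have inner : ∀ z : ℕ, 2 ≤ z →
      (∀ i, Zk i (z-1) (L:ℤ) = ∑ τ ∈ Finset.Icc 1 (z-1-1),
          D i τ (((z:ℤ) - (τ:ℤ) - 2) * L + (L:ℤ))) →
      (∀ i, Zk i (z-1) ((L:ℤ)-1) = ∑ τ ∈ Finset.Icc 1 (z-1-1),
          D i τ (((z:ℤ) - (τ:ℤ) - 2) * L + ((L:ℤ)-1))) →
      ∀ m : ℕ, m ≤ L + 1 → ∀ i, Zk i z ((m:ℤ) - 1) =
        ∑ τ ∈ Finset.Icc 1 (z-1), D i τ (((z:ℤ) - (τ:ℤ) - 1) * L + ((m:ℤ)-1)) := by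
    intro z hz hprevL hprevL1 m
    induction m using Nat.strong_induction_on with
    | _ m ih =>
      intro hm i
      obtain ⟨w, rfl⟩ : ∃ w, z = w + 2 := ⟨z - 2, by omega⟩
      simp only [show w + 2 - 1 = w + 1 from rfl, show w + 1 - 1 = w from rfl]
        at hprevL hprevL1 ⊢
      match m, hm, ih with
      | 0, hm, ih =>
        rw [show ((0:ℕ):ℤ) - 1 = -1 by norm_num, hZm1 i (w+2) (by omega),
          show w + 2 - 1 = w + 1 from rfl, hprevL1 i,
          Finset.sum_Icc_succ_top (by omega : 1 ≤ w + 1)]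
        congr 1
        · exact Finset.sum_congr rfl (fun τ _ => by congr 1; push_cast; ring)
        · rw [show (((w+2:ℕ):ℤ) - ((w+1:ℕ):ℤ) - 1) * L + (-1) = -1 by push_cast; ring,
            hDm1 i (w+1) (by omega)]
      | 1, hm, ih =>
        rw [show ((1:ℕ):ℤ) - 1 = 0 by norm_num, hZ0 i (w+2) (by omega),
          show w + 2 - 1 = w + 1 from rfl, hprevL i,
          Finset.sum_Icc_succ_top (by omega : 1 ≤ w + 1)]
        congr 1
        · exact Finset.sum_congr rfl (fun τ _ => by congr 1; push_cast; ring)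
        · rw [show (((w+2:ℕ):ℤ) - ((w+1:ℕ):ℤ) - 1) * L + 0 = 0 by push_cast; ring,
            hD0 i (w+1) (by omega)]
      | (m'+2), hm, ih =>
        rw [show ((m'+2:ℕ):ℤ) - 1 = (m':ℤ) + 1 by push_cast; ring,
          hZrec i (w+2) (by omega) (m':ℤ) (by positivity) (by omega)]
        have hc : ((m'+1:ℕ):ℤ) - 1 = (m':ℤ) := by push_cast; ring
        have ihA := fun j => ih (m'+1) (by omega) (by omega) j
        have ihB := ih m' (by omega) (by omega) i
        simp only [hc] at ihA
        rw [ihB]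
        simp only [ihA]
        rw [ag_swap]
        refine Finset.sum_congr rfl (fun τ hτ => ?_)
        rw [Finset.mem_Icc] at hτ
        have h1 : (0:ℤ) ≤ ((w+2:ℕ):ℤ) - (τ:ℤ) - 1 := by
          have : (τ:ℤ) ≤ (w:ℤ) + 1 := by exact_mod_cast hτ.2
          push_cast; omega
        have ha : (0:ℤ) ≤ (((w+2:ℕ):ℤ) - (τ:ℤ) - 1) * L + (m':ℤ) :=
          add_nonneg (mul_nonneg h1 (Int.natCast_nonneg L)) (Int.natCast_nonneg m')
        rw [show (((w+2:ℕ):ℤ) - (τ:ℤ) - 1) * L + ((m':ℤ) + 1)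
              = ((((w+2:ℕ):ℤ) - (τ:ℤ) - 1) * L + (m':ℤ)) + 1 by ring,
          hDrec i τ hτ.1 _ ha,
          show (((w+2:ℕ):ℤ) - (τ:ℤ) - 1) * L + (m':ℤ) - 1
              = (((w+2:ℕ):ℤ) - (τ:ℤ) - 1) * L + (((m':ℕ):ℤ) - 1) by push_cast; ring]
  have key : ∀ z : ℕ, 2 ≤ z → ∀ m : ℕ, m ≤ L + 1 → ∀ i, Zk i z ((m:ℤ)-1) =
      ∑ τ ∈ Finset.Icc 1 (z-1), D i τ (((z:ℤ)-(τ:ℤ)-1)*L + ((m:ℤ)-1)) := by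
    intro z hz
    induction z, hz using Nat.le_induction with
    | base =>
      refine inner 2 le_rfl ?_ ?_
      · intro i; simpa using hZ1L i
      · intro i; simpa using hZ1L1 i
    | succ z hz ihz =>
      refine inner (z+1) (by omega) ?_ ?_
      · intro i
        have h := ihz (L+1) (by omega) i
        rw [show ((L+1:ℕ):ℤ) - 1 = (L:ℤ) by push_cast; ring] at h
        rw [show z + 1 - 1 = z from rfl, h]
        exact Finset.sum_congr rfl (fun τ _ => by congr 1; push_cast; ring)
      · intro i
        have h := ihz L (by omega) i
        rw [show z + 1 - 1 = z from rfl, h]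
        exact Finset.sum_congr rfl (fun τ _ => by congr 1; push_cast; ring)
  intro z hz k hk1 hkL i
  have h := key z hz (k.toNat + 1) (by omega) i
  rwa [show ((k.toNat + 1 : ℕ):ℤ) - 1 = k by push_cast; omega] at h
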